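/- Let R be a commutative ring, F a free R-module of finite rank r, and X a submodule of F. Then the image of the induced map ⋂^r_R X → ⋂^r_R F = R (where ⋂^r denotes the r-th exterior bi-dual) equals char_R(F/X), the characteristic ideal of the quotient module F/X. -/

import Mathlib

open Module

section Defs
variable (R : Type*) [CommRing R]

/-- The `r`-th exterior bi-dual `⋂^r_R M := (⋀^r_R (M^*))^*`, realized canonically as the
module of alternating `R`-multilinear forms on `r` copies of the dual module `M^*`. -/
abbrev ExtBidual (M : Type*) [AddCommGroup M] [Module R M] (r : ℕ) :=
  (Module.Dual R M) [⋀^Fin r]→ₗ[R] R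

/-- Functoriality of the exterior bi-dual. -/
noncomputable def extBidualMap {M N : Type*} [AddCommGroup M] [Module R M]
    [AddCommGroup N] [Module R N] (r : ℕ) (f : M →ₗ[R] N) :
    ExtBidual R M r →ₗ[R] ExtBidual R N r where
  toFun φ := φ.compLinearMap f.dualMap
  map_add' := by intros; ext; rfl
  map_smul' := by intros; ext; rfl

/-- The canonical identification `⋂^s_R (R^s) = R`, given by evaluation at the
standard dual basis. -/
noncomputable def extEval (s : ℕ) : ExtBidual R (Fin s → R) s →ₗ[R] R where
  toFun φ := φ (fun i => LinearMap.proj i)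
  map_add' := by intros; rfl
  map_smul' := by intros; rfl

/-- The characteristic ideal of `M` computed from a presentation `0 → N → R^s → M → 0`
with kernel `N`: the image of the induced map `⋂^s_R N → ⋂^s_R R^s = R`. -/
noncomputable def charIdealAux (s : ℕ) (N : Submodule R (Fin s → R)) : Ideal R :=
  LinearMap.range ((extEval R s) ∘ₗ (extBidualMap R s N.subtype))

/-- The zeroth Fitting ideal of `M` computed from a presentation `0 → N → R^s → M → 0`
with kernel `N`: the ideal generated by determinants of `s × s` matrices with columns in `N`. -/
def fittIdealAux (s : ℕ) (N : Submodule R (Fin s → R)) : Ideal R :=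
  Ideal.span { x | ∃ v : Fin s → (Fin s → R), (∀ i, v i ∈ N) ∧ x = (Matrix.of v).det }
end Defs

/-! Lifting the presentations `π : R^s → F/X` and `F → F/X` against each other (their sources
are free) and shearing identifies `R^r × ker π` and `R^s × X` with one and the same fibre
product inside `R^r × R^s`. The bidual image of a submodule of `R^m` is invariant under
automorphisms of `R^m`, which act on `⋂^m R^m = R` through their determinant, a unit. It is also
unchanged when a free summand `R^r` is added: an `s`-form `ψ` on `P^*` and the `m`-form
`det ∧ ψ` on `(R^r × P)^*` take the same value on the coordinate functionals. -/

open Function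

section ExtBidual

variable {R : Type*} [CommRing R]
variable {M₁ M₂ M₃ : Type*} [AddCommGroup M₁] [Module R M₁]
  [AddCommGroup M₂] [Module R M₂] [AddCommGroup M₃] [Module R M₃]

lemma extBidualMap_id (d : ℕ) : extBidualMap R d (LinearMap.id : M₁ →ₗ[R] M₁) = LinearMap.id :=
  rfl

lemma extBidualMap_comp (d : ℕ) (f : M₂ →ₗ[R] M₃) (g : M₁ →ₗ[R] M₂) :
    extBidualMap R d (f ∘ₗ g) = extBidualMap R d f ∘ₗ extBidualMap R d g :=
  rfl

lemma extBidualMap_surjective (d : ℕ) (e : M₁ ≃ₗ[R] M₂) :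
    Surjective (extBidualMap R d (e : M₁ →ₗ[R] M₂)) := fun φ =>
  ⟨extBidualMap R d e.symm φ, by
    rw [← LinearMap.comp_apply, ← extBidualMap_comp, e.comp_symm, extBidualMap_id,
      LinearMap.id_apply]⟩

lemma LinearMap.range_smul_of_isUnit {c : R} (hc : IsUnit c) (f : M₁ →ₗ[R] M₂) :
    LinearMap.range (c • f) = LinearMap.range f := by
  obtain ⟨u, rfl⟩ := hc
  refine le_antisymm (LinearMap.range_smul_le_range f _) ?_
  calc LinearMap.range f = LinearMap.range ((↑u⁻¹ : R) • (↑u : R) • f) := by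
        rw [smul_smul, Units.inv_mul, one_smul]
    _ ≤ LinearMap.range ((↑u : R) • f) := LinearMap.range_smul_le_range _ _

noncomputable def extBidualImage (m : ℕ) (ι : M₁ →ₗ[R] (Fin m → R)) : Ideal R :=
  LinearMap.range (extEval R m ∘ₗ extBidualMap R m ι)

lemma extBidualImage_comp_linearEquiv (m : ℕ) (ι : M₂ →ₗ[R] (Fin m → R)) (e : M₁ ≃ₗ[R] M₂) :
    extBidualImage m (ι ∘ₗ e.toLinearMap) = extBidualImage m ι := by
  rw [extBidualImage, extBidualMap_comp, ← LinearMap.comp_assoc]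
  exact LinearMap.range_comp_of_range_eq_top _
    (LinearMap.range_eq_top.2 (extBidualMap_surjective m e))

lemma extBidualImage_eq_charIdealAux_range (m : ℕ) {ι : M₁ →ₗ[R] (Fin m → R)}
    (hι : Injective ι) : extBidualImage m ι = charIdealAux R m (LinearMap.range ι) := by
  have : ι = (LinearMap.range ι).subtype ∘ₗ (LinearEquiv.ofInjective ι hι).toLinearMap := by
    ext; simp
  conv_lhs => rw [this]
  exact extBidualImage_comp_linearEquiv m _ _

lemma extEval_comp_extBidualMap (m : ℕ) (g : (Fin m → R) →ₗ[R] (Fin m → R)) :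
    extEval R m ∘ₗ extBidualMap R m g = LinearMap.det g • extEval R m := by
  ext φ
  let b := (Pi.basisFun R (Fin m)).dualBasis
  have hb : ⇑b = fun i => LinearMap.proj i := by
    funext i; ext; simp [b]
  have hmat : b.toMatrix (fun i => g.dualMap (LinearMap.proj i)) =
      (LinearMap.toMatrix' g).transpose := by
    ext i j
    simp [b, Basis.toMatrix_apply, LinearMap.toMatrix'_apply]
  change φ (fun i => g.dualMap (LinearMap.proj i)) = LinearMap.det g * φ (fun i => LinearMap.proj i)
  conv_lhs => rw [φ.eq_smul_basis_det b]
  rw [AlternatingMap.smul_apply, Basis.det_apply, hmat, Matrix.det_transpose,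
    LinearMap.det_toMatrix', hb, smul_eq_mul, mul_comm]

lemma extBidualImage_linearEquiv_comp (m : ℕ) (ι : M₁ →ₗ[R] (Fin m → R))
    (g : (Fin m → R) ≃ₗ[R] (Fin m → R)) :
    extBidualImage m (g.toLinearMap ∘ₗ ι) = extBidualImage m ι := by
  rw [extBidualImage, extBidualMap_comp, ← LinearMap.comp_assoc, extEval_comp_extBidualMap,
    LinearMap.smul_comp, LinearMap.range_smul_of_isUnit g.isUnit_det']
  rfl

end ExtBidual

open Equiv TensorProduct in
lemma AlternatingMap.domCoprod_apply_sumElim {R : Type*} [CommRing R] {ιa ιb : Type*}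
    [Fintype ιa] [Fintype ιb] [DecidableEq ιa] [DecidableEq ιb]
    {M N₁ N₂ : Type*} [AddCommGroup M] [Module R M] [AddCommGroup N₁] [Module R N₁]
    [AddCommGroup N₂] [Module R N₂]
    (a : M [⋀^ιa]→ₗ[R] N₁) (b : M [⋀^ιb]→ₗ[R] N₂) (v₁ : ιa → M) (v₂ : ιb → M)
    (ha : ∀ (w : ιa → M) (i : ιa) (k : ιb), w i = v₂ k → a w = 0) :
    a.domCoprod b (Sum.elim v₁ v₂) = a v₁ ⊗ₜ[R] b v₂ := by
  rw [AlternatingMap.domCoprod_apply, _root_.sum_apply]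
  -- every shuffle other than the identity moves some argument `v₂ k` into a slot of `a`
  have hsum : ∑ σ : Perm.ModSumCongr ιa ιb,
      (AlternatingMap.domCoprod.summand a b σ) (Sum.elim v₁ v₂) =
      (AlternatingMap.domCoprod.summand a b (Quotient.mk'' 1)) (Sum.elim v₁ v₂) := by
    refine Finset.sum_eq_single_of_mem _ (Finset.mem_univ _) fun σ _ hσ => ?_
    induction σ using Quotient.inductionOn' with
    | h σ =>
      by_cases hinl : Set.MapsTo σ (Set.range Sum.inl) (Set.range Sum.inl)
      · exact absurd (Quotient.sound' (QuotientGroup.leftRel_apply.2 (by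
          simpa using Perm.mem_sumCongrHom_range_of_perm_mapsTo_inl hinl))) hσ
      · rw [Set.MapsTo] at hinl
        push Not at hinl
        obtain ⟨x, ⟨i, rfl⟩, hx⟩ := hinl
        obtain ⟨k, hk⟩ : ∃ k, σ (Sum.inl i) = Sum.inr k := by
          rcases hsi : σ (Sum.inl i) with j | k
          · exact absurd ⟨j, rfl⟩ (hsi ▸ hx)
          · exact ⟨k, rfl⟩
        have hz : a (fun i' => Sum.elim v₁ v₂ (σ (Sum.inl i'))) = 0 :=
          ha _ i k (by rw [hk]; rfl)
        rw [AlternatingMap.domCoprod.summand_mk'']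
        simp only [_root_.smul_apply, MultilinearMap.domDomCongr_apply,
          MultilinearMap.domCoprod_apply, AlternatingMap.coe_multilinearMap]
        rw [hz, TensorProduct.zero_tmul, smul_zero]
  rw [hsum, AlternatingMap.domCoprod.summand_mk'']
  simp only [Perm.sign_one, one_smul, MultilinearMap.domDomCongr_apply,
    MultilinearMap.domCoprod_apply, AlternatingMap.coe_multilinearMap, Perm.coe_one]
  rfl

section Stabilization

variable {R : Type*} [CommRing R] {r s m : ℕ} (t : Fin r ⊕ Fin s ≃ Fin m)

variable (R) in
noncomputable def piProdEquivOfSumEquiv : ((Fin r → R) × (Fin s → R)) ≃ₗ[R] (Fin m → R) :=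
  (LinearEquiv.sumArrowLequivProdArrow (Fin r) (Fin s) R R).symm ≪≫ₗ
    LinearEquiv.funCongrLeft R R t.symm

lemma piProdEquivOfSumEquiv_sumComm_trans :
    piProdEquivOfSumEquiv R ((Equiv.sumComm (Fin s) (Fin r)).trans t) =
      (LinearEquiv.prodComm R (Fin s → R) (Fin r → R)).trans (piProdEquivOfSumEquiv R t) := by
  ext ⟨a, b⟩ i
  rcases h : t.symm i with k | j <;> simp [piProdEquivOfSumEquiv, h]

variable {P : Type*} [AddCommGroup P] [Module R P]

noncomputable def prodDualFamily (g : Fin s → Dual R P) : Fin m → Dual R ((Fin r → R) × P) :=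
  Sum.elim (fun k => (LinearMap.fst R (Fin r → R) P).dualMap (LinearMap.proj k))
    ((LinearMap.snd R (Fin r → R) P).dualMap ∘ g) ∘ t.symm

lemma prodDualFamily_update [DecidableEq (Fin s)] (g : Fin s → Dual R P) (j : Fin s)
    (y : Dual R P) :
    prodDualFamily t (update g j y) =
      update (prodDualFamily t g) (t (.inr j)) ((LinearMap.snd R (Fin r → R) P).dualMap y) := by
  obtain rfl : ‹DecidableEq (Fin s)› = instDecidableEqFin s := Subsingleton.elim _ _
  rw [prodDualFamily, prodDualFamily, comp_update, Sum.elim_update_right, update_comp_equiv,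
    Equiv.symm_symm]

noncomputable def restrictForm (φ : Dual R ((Fin r → R) × P) [⋀^Fin m]→ₗ[R] R) :
    Dual R P [⋀^Fin s]→ₗ[R] R where
  toFun g := φ (prodDualFamily t g)
  map_update_add' g j x y := by
    simp only [prodDualFamily_update, map_add]
    exact φ.map_update_add _ _ _ _
  map_update_smul' g j c x := by
    simp only [prodDualFamily_update, map_smul]
    exact φ.map_update_smul _ _ _ _
  map_eq_zero_of_eq' g i j hg hij :=
    φ.map_eq_zero_of_eq _ (i := t (.inr i)) (j := t (.inr j)) (by simp [prodDualFamily, hg])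
      (by simpa using hij)

noncomputable def extendForm (ψ : Dual R P [⋀^Fin s]→ₗ[R] R) :
    Dual R ((Fin r → R) × P) [⋀^Fin m]→ₗ[R] R :=
  AlternatingMap.domDomCongr t <| (TensorProduct.lid R R).toLinearMap.compAlternatingMap <|
    ((Pi.basisFun R (Fin r)).dualBasis.det.compLinearMap
      (LinearMap.inl R (Fin r → R) P).dualMap).domCoprod
    (ψ.compLinearMap (LinearMap.inr R (Fin r → R) P).dualMap)

lemma extendForm_apply_prodDualFamily (ψ : Dual R P [⋀^Fin s]→ₗ[R] R) (g : Fin s → Dual R P) :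
    extendForm t ψ (prodDualFamily t g) = ψ g := by
  have hfree : ∀ (w : Fin r → Dual R ((Fin r → R) × P)) (i : Fin r) (k : Fin s),
      w i = ((LinearMap.snd R (Fin r → R) P).dualMap ∘ g) k →
      (Pi.basisFun R (Fin r)).dualBasis.det.compLinearMap
        (LinearMap.inl R (Fin r → R) P).dualMap w = 0 := by
    intro w i k hw
    rw [AlternatingMap.compLinearMap_apply]
    refine AlternatingMap.map_coord_zero _ i ?_
    rw [hw]
    exact LinearMap.ext fun x => by simp
  have hbasis : (fun k => (LinearMap.inl R (Fin r → R) P).dualMap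
      ((LinearMap.fst R (Fin r → R) P).dualMap (LinearMap.proj k))) =
      ⇑(Pi.basisFun R (Fin r)).dualBasis := by
    funext k; ext; simp
  simp only [extendForm, prodDualFamily, AlternatingMap.domDomCongr_apply,
    LinearMap.compAlternatingMap_apply, Function.comp_assoc, Equiv.symm_comp_self,
    Function.comp_id]
  rw [AlternatingMap.domCoprod_apply_sumElim _ _ _ _ hfree]
  simp only [AlternatingMap.compLinearMap_apply, hbasis, Basis.det_self, comp_apply,
    LinearEquiv.coe_coe, TensorProduct.lid_tmul, smul_eq_mul, one_mul]
  rfl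

lemma extBidualImage_piProdEquivOfSumEquiv_comp_prodMap (ι : P →ₗ[R] (Fin s → R)) :
    extBidualImage m ((piProdEquivOfSumEquiv R t).toLinearMap ∘ₗ (LinearMap.id.prodMap ι)) =
      extBidualImage s ι := by
  have hfamily : (fun i => ((piProdEquivOfSumEquiv R t).toLinearMap ∘ₗ
      (LinearMap.id.prodMap ι)).dualMap (LinearMap.proj i)) =
      prodDualFamily t (fun j => ι.dualMap (LinearMap.proj j)) := by
    funext i
    refine LinearMap.ext fun p => ?_
    rcases h : t.symm i with k | j <;> simp [piProdEquivOfSumEquiv, prodDualFamily, h]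
  ext x
  constructor
  · rintro ⟨φ, rfl⟩
    exact ⟨restrictForm t φ, congrArg φ hfamily.symm⟩
  · rintro ⟨ψ, rfl⟩
    refine ⟨extendForm t ψ, ?_⟩
    change extendForm t ψ (fun i => _) = ψ _
    rw [hfamily, extendForm_apply_prodDualFamily]

end Stabilization

section CharIdeal

variable {R : Type*} [CommRing R]

lemma charIdealAux_map_linearEquiv {m : ℕ} (K : Submodule R (Fin m → R))
    (g : (Fin m → R) ≃ₗ[R] (Fin m → R)) :
    charIdealAux R m (K.map g.toLinearMap) = charIdealAux R m K := by
  have hrange : K.map g.toLinearMap = LinearMap.range (g.toLinearMap ∘ₗ K.subtype) := by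
    rw [LinearMap.range_comp, K.range_subtype]
  have hinj : Injective (g.toLinearMap ∘ₗ K.subtype) := by
    rw [LinearMap.coe_comp]; exact g.injective.comp K.injective_subtype
  rw [hrange, ← extBidualImage_eq_charIdealAux_range _ hinj, extBidualImage_linearEquiv_comp]
  rfl

lemma charIdealAux_map_linearEquiv_eq {Q : Type*} [AddCommGroup Q] [Module R Q] {m : ℕ}
    (K : Submodule R Q) (e e' : Q ≃ₗ[R] (Fin m → R)) :
    charIdealAux R m (K.map e.toLinearMap) = charIdealAux R m (K.map e'.toLinearMap) := by
  have : e' = e.trans (e.symm.trans e') := by ext; simp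
  rw [this, LinearEquiv.coe_trans, Submodule.map_comp, charIdealAux_map_linearEquiv]

lemma charIdealAux_map_top_prod {r s m : ℕ} (t : Fin r ⊕ Fin s ≃ Fin m)
    (N : Submodule R (Fin s → R)) :
    charIdealAux R m (((⊤ : Submodule R (Fin r → R)).prod N).map
      (piProdEquivOfSumEquiv R t).toLinearMap) = charIdealAux R s N := by
  have hrange : ((⊤ : Submodule R (Fin r → R)).prod N).map
      (piProdEquivOfSumEquiv R t).toLinearMap =
      LinearMap.range ((piProdEquivOfSumEquiv R t).toLinearMap ∘ₗ
        (LinearMap.id.prodMap N.subtype)) := by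
    rw [LinearMap.range_comp, LinearMap.range_prodMap, LinearMap.range_id, N.range_subtype]
  have hinj : Injective ((piProdEquivOfSumEquiv R t).toLinearMap ∘ₗ
      (LinearMap.id.prodMap N.subtype)) :=
    (piProdEquivOfSumEquiv R t).injective.comp
      (Prod.map_injective.2 ⟨injective_id, N.injective_subtype⟩)
  rw [hrange, ← extBidualImage_eq_charIdealAux_range _ hinj,
    extBidualImage_piProdEquivOfSumEquiv_comp_prodMap]
  rfl

end CharIdeal

section FiberProduct

variable {R : Type*} [CommRing R] {A B M : Type*} [AddCommGroup A] [Module R A]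
  [AddCommGroup B] [Module R B] [AddCommGroup M] [Module R M]

def fiberProduct (f : A →ₗ[R] M) (g : B →ₗ[R] M) : Submodule R (A × B) :=
  LinearMap.eqLocus (f ∘ₗ LinearMap.fst R A B) (g ∘ₗ LinearMap.snd R A B)

lemma mem_fiberProduct {f : A →ₗ[R] M} {g : B →ₗ[R] M} {x : A × B} :
    x ∈ fiberProduct f g ↔ f x.1 = g x.2 :=
  Iff.rfl

lemma fiberProduct_map_prodComm (f : A →ₗ[R] M) (g : B →ₗ[R] M) :
    (fiberProduct f g).map (LinearEquiv.prodComm R A B).toLinearMap = fiberProduct g f := by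
  ext x
  simp [Submodule.mem_map_equiv, mem_fiberProduct, eq_comm]

lemma map_skewProd_top_prod_ker {π : A →ₗ[R] M} {q : B →ₗ[R] M} {β : B →ₗ[R] A}
    (hβ : π ∘ₗ β = q) :
    ((⊤ : Submodule R B).prod (LinearMap.ker π)).map
      ((LinearEquiv.refl R B).skewProd (LinearEquiv.refl R A) β).toLinearMap =
      fiberProduct q π := by
  ext x
  simp only [Submodule.mem_map_equiv, LinearEquiv.skewProd_symm_apply, LinearEquiv.refl_symm,
    LinearEquiv.refl_apply, Submodule.mem_prod, Submodule.mem_top, LinearMap.mem_ker, map_sub,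
    sub_eq_zero, true_and, ← hβ, mem_fiberProduct, LinearMap.coe_comp, comp_apply]
  exact eq_comm

end FiberProduct

lemma charIdealAux_ker_eq_fiberProduct {R M : Type*} [CommRing R] [AddCommGroup M] [Module R M]
    {r s m : ℕ} {π : (Fin s → R) →ₗ[R] M} {q : (Fin r → R) →ₗ[R] M}
    {β : (Fin r → R) →ₗ[R] (Fin s → R)} (hβ : π ∘ₗ β = q) (t : Fin r ⊕ Fin s ≃ Fin m) :
    charIdealAux R s (LinearMap.ker π) =
      charIdealAux R m ((fiberProduct q π).map (piProdEquivOfSumEquiv R t).toLinearMap) := by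
  rw [← charIdealAux_map_top_prod t, ← map_skewProd_top_prod_ker hβ, ← Submodule.map_comp,
    ← LinearEquiv.coe_trans]
  exact charIdealAux_map_linearEquiv_eq _ _ _

theorem char_quotient_eq_image (R : Type*) [CommRing R]
    (r : ℕ) (X : Submodule R (Fin r → R))
    (s : ℕ) (π : (Fin s → R) →ₗ[R] ((Fin r → R) ⧸ X))
    (hπ : Function.Surjective π) :
    charIdealAux R s (LinearMap.ker π) = charIdealAux R r X := by
  obtain ⟨β, hβ⟩ := Module.projective_lifting_property π X.mkQ hπ
  obtain ⟨α, hα⟩ := Module.projective_lifting_property X.mkQ π X.mkQ_surjective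
  have hX := charIdealAux_ker_eq_fiberProduct hα
    ((Equiv.sumComm (Fin s) (Fin r)).trans finSumFinEquiv)
  rw [X.ker_mkQ, piProdEquivOfSumEquiv_sumComm_trans, LinearEquiv.coe_trans, Submodule.map_comp,
    fiberProduct_map_prodComm] at hX
  rw [charIdealAux_ker_eq_fiberProduct hβ finSumFinEquiv, hX]
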